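/- arXiv:2006.02429 — 2 statements merged into one kernel-verified Lean document; each statement's English description precedes it below -/
import Mathlib

section
/- With the same notation, if additionally t_n > 3t_{n-1} for all n ≥ 1, then for every n ≥ 0 the set (⋃_{m ≥ n+1} (-(J_m ∩ ℤ^d_{≥ -2t_{m-1}}))) + W contains no point of I_n. -/
open Pointwise

/-- `ℤ^d` equipped with the lexicographic order. -/
abbrev Zd (d : ℕ) := Lex (Fin d → ℤ)

/-- the value `t (n-1)` with the convention `t_{-1} = 0`. -/
def tprev {d : ℕ} (t : ℕ → Zd d) : ℕ → Zd d := fun n => if n = 0 then 0 else t (n - 1)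

/-- `I_n = X_{-t_n, -t_{n-1}}`. -/
def Iset {d : ℕ} (t : ℕ → Zd d) (n : ℕ) : Set (Zd d) :=
  {x | -(t n) ≤ x} \ {x | -(tprev t n) ≤ x}

/-- `J_n = X_{-t_n, -t_{n-1} - t_{n-2}}`. -/
def Jset {d : ℕ} (t : ℕ → Zd d) (n : ℕ) : Set (Zd d) :=
  {x | -(t n) ≤ x} \ {x | -(tprev t n + tprev t (n - 1)) ≤ x}

/-- `W = {t_n : n ≥ 0} ∪ {0} ∪ {-t_n : n ≥ 0}`. -/
def Wset {d : ℕ} (t : ℕ → Zd d) : Set (Zd d) :=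
  Set.range t ∪ {0} ∪ -(Set.range t)

/-- `V = {t_n : n ≥ 0} ∪ {-t_n : n ≥ 0}`. -/
def Vset {d : ℕ} (t : ℕ → Zd d) : Set (Zd d) :=
  Set.range t ∪ -(Set.range t)

/-- `(A, B)` is a co-minimal pair: `A + B = G` and removing any single element of
`A` or of `B` destroys the complement property. -/
def IsCoMinimalPair {G : Type*} [AddCommGroup G] (A B : Set G) : Prop :=
  A + B = Set.univ ∧
  (∀ a ∈ A, (A \ {a}) + B ≠ Set.univ) ∧
  (∀ b ∈ B, A + (B \ {b}) ≠ Set.univ)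

/-
Write `x = z + w` with `x ∈ I_n`, `-z ∈ J_m ∩ ℤ^d_{≥ -2t_{m-1}}` (`m > n`) and `w ∈ W`.
Then `x < 0` and `t_{m-1} < z ≤ 2t_{m-1}`, so `w` must be some `-t_k`, and
`t_k = z - x ∈ (t_{m-1}, 2t_{m-1} + t_n] ⊆ (t_{m-1}, 3t_{m-1}]`,
an interval that the growth condition `3t_{m-1} < t_m` keeps free of terms of `t`.
-/

theorem StrictMono.notMem_Ioc_three_nsmul {G : Type*} [AddMonoid G] [Preorder G]
    {t : ℕ → G} (hmono : StrictMono t)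
    (hgrow : ∀ n, 3 • t n < t (n + 1)) (m k : ℕ) : t k ∉ Set.Ioc (t m) (3 • t m) := by
  rintro ⟨hlow, hup⟩
  have hmk : m + 1 ≤ k := hmono.lt_iff_lt.mp hlow
  exact (hup.trans_lt ((hgrow m).trans_le (hmono.monotone hmk))).false

theorem StrictMono.add_neg_notMem_Ico {G : Type*} [AddCommGroup G] [LinearOrder G]
    [IsOrderedAddMonoid G] {t : ℕ → G} (hmono : StrictMono t)
    (hgrow : ∀ n, 3 • t n < t (n + 1)) {n m : ℕ} (hnm : n ≤ m) {z : G}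
    (hz : z ∈ Set.Ioc (t m) (2 • t m)) (k : ℕ) : z + -(t k) ∉ Set.Ico (-(t n)) 0 := by
  rintro ⟨hlow, hneg⟩
  rw [← sub_eq_add_neg] at hlow
  refine hmono.notMem_Ioc_three_nsmul hgrow m k ⟨hz.1.trans (add_neg_neg_iff.mp hneg), ?_⟩
  calc t k ≤ z + t n := neg_le_sub_iff_le_add.mp hlow
    _ ≤ 2 • t m + t m := add_le_add hz.2 (hmono.monotone hnm)
    _ = 3 • t m := (succ_nsmul _ 2).symm

section

variable {d : ℕ} {t : ℕ → Zd d}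

lemma tprev_nonneg (hmono : StrictMono t) (hpos : 0 < t 0) (n : ℕ) : 0 ≤ tprev t n := by
  unfold tprev
  split_ifs
  · exact le_rfl
  · exact hpos.le.trans (hmono.monotone (Nat.zero_le _))

lemma Iset_subset_Ico (hmono : StrictMono t) (hpos : 0 < t 0) (n : ℕ) :
    Iset t n ⊆ Set.Ico (-(t n)) 0 := by
  rintro x ⟨hlow, hup⟩
  simp only [Set.mem_ofPred_eq, not_le] at hlow hup
  exact ⟨hlow, hup.trans_le (neg_nonpos.mpr (tprev_nonneg hmono hpos n))⟩

lemma neg_Jset_inter_subset_Ioc (hmono : StrictMono t) (hpos : 0 < t 0) (m : ℕ) :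
    -(Jset t (m + 1) ∩ {y | -(2 • tprev t (m + 1)) ≤ y}) ⊆ Set.Ioc (t m) (2 • t m) := by
  rintro z ⟨⟨-, hlow⟩, hup⟩
  simp only [tprev, Nat.add_sub_cancel, if_neg (Nat.succ_ne_zero m), Set.mem_ofPred_eq,
    not_le] at hlow hup
  exact ⟨(le_add_of_nonneg_right (tprev_nonneg hmono hpos m)).trans_lt (neg_lt_neg_iff.mp hlow),
    neg_le_neg_iff.mp (by simpa using hup)⟩

lemma nonneg_or_eq_neg_of_mem_Wset (hmono : StrictMono t) (hpos : 0 < t 0) {w : Zd d}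
    (hw : w ∈ Wset t) : 0 ≤ w ∨ ∃ k, w = -(t k) := by
  rcases hw with (⟨k, rfl⟩ | rfl) | ⟨k, hk⟩
  · exact .inl (hpos.le.trans (hmono.monotone (Nat.zero_le k)))
  · exact .inl le_rfl
  · exact .inr ⟨k, neg_eq_iff_eq_neg.mp hk.symm⟩

end

theorem stmt5_general {d : ℕ} (t : ℕ → Zd d) (hmono : StrictMono t)
    (hpos : 0 < t 0) (hgrow : ∀ n : ℕ, 3 • t n < t (n + 1)) :
    ∀ n : ℕ, ∀ x ∈ Iset t n,
      x ∉ (⋃ m : ℕ, ⋃ (_ : n + 1 ≤ m),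
            -(Jset t m ∩ {y : Zd d | -(2 • tprev t m) ≤ y})) + Wset t := by
  rintro n x hx ⟨z, hz, w, hw, rfl⟩
  obtain ⟨m, hnm, hz⟩ := Set.mem_iUnion₂.mp hz
  obtain ⟨m, rfl⟩ : ∃ m', m = m' + 1 := ⟨m - 1, by omega⟩
  have hx' := Iset_subset_Ico hmono hpos n hx
  have hz' := neg_Jset_inter_subset_Ioc hmono hpos m hz
  rcases nonneg_or_eq_neg_of_mem_Wset hmono hpos hw with hw | ⟨k, rfl⟩
  · have hzpos : 0 < z := (hpos.trans_le (hmono.monotone (Nat.zero_le m))).trans hz'.1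
    exact hx'.2.not_ge (add_nonneg hzpos.le hw)
  · exact hmono.add_neg_notMem_Ico hgrow (by omega) hz' k hx'

theorem stmt5 {d : ℕ} (hd : 0 < d) (t : ℕ → Zd d) (hmono : StrictMono t)
    (hpos : 0 < t 0) (hgrow : ∀ n : ℕ, 3 • t n < t (n + 1))
    (hcoord : ∃ n : ℕ, ∀ i : Fin d, 0 < ofLex (t n) i) :
    ∀ n : ℕ, ∀ x ∈ Iset t n,
      x ∉ (⋃ m : ℕ, ⋃ (_ : n + 1 ≤ m),
            -(Jset t m ∩ {y : Zd d | -(2 • tprev t m) ≤ y})) + Wset t :=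
  stmt5_general t hmono hpos hgrow
end

section
/- Every infinite subset of any finitely generated abelian group G has uncountably many subsets each of which is part of a co-minimal pair in G. -/
/-!
A finitely generated abelian group admits a homomorphism `φ : G →+ ℤ` that is unbounded above
on the infinite set `A`, so `A` contains a sequence `t` along which `φ` grows lacunarily:
`φ (t (n + 1)) > 2 φ (t n) + n`. For every infinite `S ⊆ ℕ` the set `t '' S` then tiles the
countable group `G`: enumerate `G` and cover each element `z` not yet covered by adding
`z - t k` to the complement, with `k ∈ S` so large that lacunarity forbids any collision
`t n + (z - t k) = t n' + c` with an earlier `c`. A tiling `B ⊕ C = G` is a co-minimal pair,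
and `S ↦ t '' S` is injective on the uncountably many infinite `S ⊆ ℕ`.
-/

open Pointwise

open Set

section Complement

variable {G : Type*} [AddCommGroup G] {B C : Set G}

theorem AddSubgroup.IsComplement.symm (h : AddSubgroup.IsComplement B C) :
    AddSubgroup.IsComplement C B := by
  have hswap : (fun x : C × B => x.1.1 + x.2.1) =
      (fun x : B × C => x.1.1 + x.2.1) ∘ Equiv.prodComm C B := by
    ext x
    exact add_comm _ _
  rw [AddSubgroup.IsComplement, hswap]
  exact h.comp (Equiv.bijective _)

theorem AddSubgroup.IsComplement.diff_singleton_add_ne_univ (h : AddSubgroup.IsComplement B C)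
    {b : G} (hb : b ∈ B) : (B \ {b}) + C ≠ univ := by
  intro hcov
  obtain ⟨c, hc⟩ := h.nonempty_right
  obtain ⟨b', ⟨hb', hne⟩, c', hc', hsum⟩ : b + c ∈ (B \ {b}) + C := hcov ▸ mem_univ _
  have := h.1 (a₁ := (⟨b', hb'⟩, ⟨c', hc'⟩)) (a₂ := (⟨b, hb⟩, ⟨c, hc⟩)) hsum
  exact hne (congrArg (fun x : B × C => x.1.1) this)

theorem AddSubgroup.IsComplement.isCoMinimalPair (h : AddSubgroup.IsComplement B C) :
    IsCoMinimalPair B C := by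
  refine ⟨h.add_eq, fun b hb => h.diff_singleton_add_ne_univ hb, fun c hc => ?_⟩
  rw [add_comm]
  exact h.symm.diff_singleton_add_ne_univ hc

theorem AddSubgroup.IsComplement.of_injOn (hinj : (B ×ˢ C).InjOn (fun p => p.1 + p.2))
    (hcov : B + C = univ) : AddSubgroup.IsComplement B C := by
  refine ⟨fun x y hxy => ?_, fun z => ?_⟩
  · obtain ⟨⟨b₁, hb₁⟩, ⟨c₁, hc₁⟩⟩ := x
    obtain ⟨⟨b₂, hb₂⟩, ⟨c₂, hc₂⟩⟩ := y
    obtain ⟨rfl, rfl⟩ := Prod.mk.inj (hinj (mk_mem_prod hb₁ hc₁) (mk_mem_prod hb₂ hc₂) hxy)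
    rfl
  · obtain ⟨b, hb, c, hc, rfl⟩ : z ∈ B + C := hcov ▸ mem_univ z
    exact ⟨(⟨b, hb⟩, ⟨c, hc⟩), rfl⟩

theorem injOn_add_insert (hC : (B ×ˢ C).InjOn (fun p => p.1 + p.2)) {c : G}
    (hc : ∀ b ∈ B, ∀ b' ∈ B, ∀ c' ∈ C, b + c ≠ b' + c') :
    (B ×ˢ insert c C).InjOn (fun p => p.1 + p.2) := by
  rintro ⟨b₁, c₁⟩ ⟨hb₁, hc₁ | hc₁⟩ ⟨b₂, c₂⟩ ⟨hb₂, hc₂ | hc₂⟩ (h : b₁ + c₁ = b₂ + c₂)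
  · subst hc₁ hc₂
    rw [add_right_cancel h]
  · exact absurd (hc₁ ▸ h) (hc b₁ hb₁ b₂ hb₂ c₂ hc₂)
  · exact absurd (hc₂ ▸ h.symm) (hc b₂ hb₂ b₁ hb₁ c₁ hc₁)
  · exact hC ⟨hb₁, hc₁⟩ ⟨hb₂, hc₂⟩ h

theorem exists_isComplement_of_forall_exists_superset [Countable G]
    (hext : ∀ C : Finset G, (B ×ˢ (C : Set G)).InjOn (fun p => p.1 + p.2) → ∀ z,
      ∃ C' : Finset G, C ⊆ C' ∧ (B ×ˢ (C' : Set G)).InjOn (fun p => p.1 + p.2) ∧ z ∈ B + C') :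
    ∃ C, AddSubgroup.IsComplement B C := by
  obtain ⟨x, hx⟩ := exists_surjective_nat G
  choose F hFsub hFinj hFmem using hext
  let seq : ℕ → {C : Finset G // (B ×ˢ (C : Set G)).InjOn (fun p => p.1 + p.2)} := fun n =>
    Nat.rec ⟨∅, by simp⟩ (fun m C => ⟨F C.1 C.2 (x m), hFinj _ _ _⟩) n
  have hmono : Monotone fun n => (seq n).1 :=
    monotone_nat_of_le_succ fun n => hFsub _ _ _
  refine ⟨⋃ n, ((seq n).1 : Set G), .of_injOn ?_ ?_⟩
  · rintro ⟨b₁, c₁⟩ ⟨hb₁, hc₁⟩ ⟨b₂, c₂⟩ ⟨hb₂, hc₂⟩ h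
    obtain ⟨m₁, hm₁⟩ := mem_iUnion.1 hc₁
    obtain ⟨m₂, hm₂⟩ := mem_iUnion.1 hc₂
    exact (seq (max m₁ m₂)).2 ⟨hb₁, hmono (le_max_left _ _) hm₁⟩
      ⟨hb₂, hmono (le_max_right _ _) hm₂⟩ h
  · refine eq_univ_of_forall fun z => ?_
    obtain ⟨m, rfl⟩ := hx z
    exact add_subset_add_left (subset_iUnion (fun n => ((seq n).1 : Set G)) (m + 1))
      (hFmem _ _ (x m))

theorem exists_superset_injOn_add_of_forall_finset
    (h : ∀ (C : Finset G) (z : G), z ∉ B + C →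
      ∃ b ∈ B, ∀ b₁ ∈ B, ∀ b₂ ∈ B, ∀ c ∈ C, b₁ + (z - b) ≠ b₂ + c)
    (C : Finset G) (hC : (B ×ˢ (C : Set G)).InjOn (fun p => p.1 + p.2)) (z : G) :
    ∃ C' : Finset G, C ⊆ C' ∧ (B ×ˢ (C' : Set G)).InjOn (fun p => p.1 + p.2) ∧ z ∈ B + C' := by
  classical
  by_cases hz : z ∈ B + C
  · exact ⟨C, subset_rfl, hC, hz⟩
  obtain ⟨b, hb, hfresh⟩ := h C z hz
  refine ⟨insert (z - b) C, Finset.subset_insert _ _, ?_,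
    b, hb, z - b, Finset.mem_insert_self _ _, add_sub_cancel b z⟩
  rw [Finset.coe_insert]
  exact injOn_add_insert hC hfresh

end Complement

def IsLacunary (a : ℕ → ℤ) : Prop :=
  0 ≤ a 0 ∧ ∀ n, 2 * a n + n < a (n + 1)

namespace IsLacunary

variable {a : ℕ → ℤ}

theorem natCast_le (ha : IsLacunary a) (n : ℕ) : (n : ℤ) ≤ a n := by
  induction n with
  | zero => exact ha.1
  | succ n ih => have := ha.2 n; omega

theorem nonneg (ha : IsLacunary a) (n : ℕ) : 0 ≤ a n :=
  (Int.natCast_nonneg n).trans (ha.natCast_le n)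

theorem strictMono (ha : IsLacunary a) : StrictMono a :=
  strictMono_nat_of_lt_succ fun n => by have := ha.2 n; have := ha.nonneg n; omega

theorem add_add_le (ha : IsLacunary a) {m m' n : ℕ} (hm : m < n) (hm' : m' < n) :
    a m + a m' + n ≤ a n := by
  obtain ⟨k, rfl⟩ : ∃ k, n = k + 1 := ⟨n - 1, by omega⟩
  have := ha.2 k
  have := ha.strictMono.monotone (Nat.le_of_lt_succ hm)
  have := ha.strictMono.monotone (Nat.le_of_lt_succ hm')
  push_cast
  omega

theorem le_natAbs_add_sub (ha : IsLacunary a) {k j : ℕ} (hkj : k ≠ j) (i : ℕ) :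
    k ≤ (a k + a i - a j).natAbs := by
  rcases eq_or_ne i j with rfl | hij
  · have := ha.natCast_le k
    omega
  by_cases hj : k < j ∧ i < j
  · have := ha.add_add_le hj.1 hj.2
    omega
  · have hmax : a (max k i) ≤ a k + a i := by
      rcases le_total k i with h | h
      · simpa [max_eq_right h] using ha.nonneg k
      · simpa [max_eq_left h] using ha.nonneg i
    have := ha.add_add_le (m' := 0) (show j < max k i by omega) (by omega)
    have := ha.nonneg 0
    omega

end IsLacunary

theorem exists_seq_isLacunary_comp {α : Type*} (f : α → ℤ) {A : Set α}
    (hA : ¬ BddAbove (f '' A)) :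
    ∃ t : ℕ → α, (∀ n, t n ∈ A) ∧ IsLacunary (f ∘ t) := by
  simp only [not_bddAbove_iff, mem_image, exists_exists_and_eq_and] at hA
  choose g hgA hg using hA
  let t : ℕ → α := fun n => Nat.rec (g 0) (fun n prev => g (2 * f prev + n)) n
  refine ⟨t, fun n => ?_, (hg 0).le, fun n => hg _⟩
  cases n <;> exact hgA _

theorem exists_isComplement_image_of_isLacunary {G : Type*} [AddCommGroup G] [Countable G]
    (φ : G →+ ℤ) {t : ℕ → G} (ht : IsLacunary (φ ∘ t)) {S : Set ℕ} (hS : S.Infinite) :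
    ∃ C, AddSubgroup.IsComplement (t '' S) C := by
  refine exists_isComplement_of_forall_exists_superset
    (exists_superset_injOn_add_of_forall_finset ?_)
  intro C z hz
  -- `k` exceeds every `|φ z - φ c|`, which by `le_natAbs_add_sub` rules out all collisions.
  obtain ⟨k, hkS, hk⟩ := hS.exists_gt (C.sup fun c => (φ z - φ c).natAbs)
  refine ⟨t k, mem_image_of_mem t hkS, ?_⟩
  rintro _ ⟨n, hnS, rfl⟩ _ ⟨n', hn'S, rfl⟩ c hc hsum
  rcases eq_or_ne k n with rfl | hkn
  · exact hz ⟨t n', mem_image_of_mem t hn'S, c, hc, hsum.symm.trans (add_sub_cancel _ _)⟩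
  · have hval : φ (t k) + φ (t n') - φ (t n) = φ z - φ c := by
      have := congrArg φ hsum
      simp only [map_add, map_sub] at this
      linarith
    have hbig := ht.le_natAbs_add_sub hkn n'
    simp only [Function.comp_apply, hval] at hbig
    have := Finset.le_sup (f := fun c => (φ z - φ c).natAbs) hc
    omega

theorem AddGroup.FG.exists_addMonoidHom_int_not_bddAbove {G : Type*} [AddCommGroup G]
    [AddGroup.FG G] {A : Set G} (hA : A.Infinite) : ∃ φ : G →+ ℤ, ¬ BddAbove (φ '' A) := by
  obtain ⟨n, ι, _, p, hp, e, ⟨eqv⟩⟩ := AddCommGroup.equiv_free_prod_directSum_zmod G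
  have : ∀ i, NeZero (p i ^ e i) := fun i => ⟨pow_ne_zero _ (hp i).ne_zero⟩
  have : Finite (DirectSum ι fun i => ZMod (p i ^ e i)) :=
    Finite.of_injective (fun f i => f i) DFunLike.coe_injective
  by_contra! hbdd
  let coord (i : Fin n) : G →+ ℤ :=
    (Finsupp.applyAddHom i).comp ((AddMonoidHom.fst _ _).comp eqv.toAddMonoidHom)
  have hfin (i : Fin n) : (coord i '' A).Finite := by
    refine BddBelow.finite_of_bddAbove ?_ (hbdd (coord i))
    obtain ⟨M, hM⟩ := hbdd (-coord i)
    refine ⟨-M, ?_⟩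
    rintro _ ⟨g, hg, rfl⟩
    have : -coord i g ≤ M := hM ⟨g, hg, rfl⟩
    linarith
  refine hA (Finite.of_finite_image (f := fun g => (fun i => coord i g, (eqv g).2)) ?_ ?_)
  · refine ((Finite.pi hfin).prod finite_univ).subset ?_
    rintro _ ⟨g, hg, rfl⟩
    exact ⟨fun i _ => ⟨g, hg, rfl⟩, trivial⟩
  · intro g₁ _ g₂ _ h
    exact eqv.injective (Prod.ext (Finsupp.ext fun i => congrFun (congrArg Prod.fst h) i)
      (congrArg Prod.snd h :))

theorem not_countable_setOf_infinite_nat : ¬ {S : Set ℕ | S.Infinite}.Countable := by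
  intro h
  have : Countable (Set ℕ) := by
    rw [← countable_univ_iff, ← union_compl_self {S : Set ℕ | S.Finite}]
    exact Countable.ofPred_finite.union h
  obtain ⟨f, hf⟩ := Countable.exists_injective_nat (Set ℕ)
  exact Function.cantor_injective f hf

theorem stmt16 {G : Type*} [AddCommGroup G] [AddGroup.FG G]
    (A : Set G) (hA : A.Infinite) :
    ¬ {B : Set G | B ⊆ A ∧ ∃ C : Set G, IsCoMinimalPair B C}.Countable := by
  intro hcount
  have : Countable G := Finsupp.Countable.of_moduleFinite (R := ℤ)
  obtain ⟨φ, hφ⟩ := AddGroup.FG.exists_addMonoidHom_int_not_bddAbove hA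
  obtain ⟨t, htA, ht⟩ := exists_seq_isLacunary_comp φ hφ
  have hinj : Function.Injective (image t) :=
    image_injective.2 ht.strictMono.injective.of_comp
  refine not_countable_setOf_infinite_nat ((hcount.preimage hinj).mono fun S hS => ?_)
  obtain ⟨C, hC⟩ := exists_isComplement_image_of_isLacunary φ ht hS
  exact ⟨image_subset_iff.2 fun n _ => htA n, C, hC.isCoMinimalPair⟩
end
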